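/- arXiv:2402.04407 — 3 statements merged into one kernel-verified Lean document; each statement's English description precedes it below -/
import Mathlib

section
/- Let 1 ≤ N ≤ M be integers. There exists an N-dimensional linear subspace V ⊂ ℝ^M such that every nonzero vector x ∈ V vanishes in strictly fewer than N coordinates, i.e. for every x ∈ V with x ≠ 0 the set {i ∈ {1,…,M} : x_i = 0} has cardinality strictly less than N. -/
open Polynomial

/-- **Generic subspaces have no sparse vectors** (Lemma `non-zero-coordinate-lemma`).
For `1 ≤ N ≤ M` there exists an `N`-dimensional subspace `V ⊆ ℝ^M` such that every
nonzero `x ∈ V` vanishes in strictly fewer than `N` coordinates. -/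
theorem exists_subspace_nonvanishing (N M : ℕ) (hN : 1 ≤ N) (hNM : N ≤ M) :
    ∃ V : Submodule ℝ (Fin M → ℝ), Module.finrank ℝ V = N ∧
      ∀ x ∈ V, x ≠ 0 → {i : Fin M | x i = 0}.ncard < N := by
  classical
  -- linear map sending a polynomial of degree < N to its evaluations at 0,1,...,M-1
  set L : (degreeLT ℝ N) →ₗ[ℝ] (Fin M → ℝ) :=
    (LinearMap.pi fun i : Fin M => Polynomial.leval ((i : ℕ) : ℝ)) ∘ₗ
      (degreeLT ℝ N).subtype
  have hfin : ∀ p : degreeLT ℝ N, (p : ℝ[X]).natDegree < N := by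
    intro p
    rcases eq_or_ne (p : ℝ[X]) 0 with h | h
    · simp [h]; omega
    · have := (Polynomial.mem_degreeLT.mp p.2)
      rwa [Polynomial.degree_eq_natDegree h, Nat.cast_lt] at this
  have hinjcast : Function.Injective (fun i : Fin M => ((i : ℕ) : ℝ)) := by
    intro i j hij
    exact Fin.ext (Nat.cast_injective hij)
  have hLinj : Function.Injective L := by
    rw [← LinearMap.ker_eq_bot, LinearMap.ker_eq_bot']
    intro p hp
    have heval : ∀ i : Fin M, (p : ℝ[X]).eval ((i : ℕ) : ℝ) = 0 := by
      intro i
      have := congrFun hp i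
      simpa [L] using this
    have hp0 : (p : ℝ[X]) = 0 := by
      apply Polynomial.eq_zero_of_natDegree_lt_card_of_eval_eq_zero _ hinjcast heval
      simpa using lt_of_lt_of_le (hfin p) hNM
    exact Subtype.ext hp0
  refine ⟨LinearMap.range L, ?_, ?_⟩
  · rw [LinearMap.finrank_range_of_inj hLinj]
    rw [(Polynomial.degreeLTEquiv ℝ N).finrank_eq]
    simp
  · rintro x ⟨p, rfl⟩ hx
    have hp0 : (p : ℝ[X]) ≠ 0 := by
      rintro h
      apply hx
      have : p = 0 := Subtype.ext h
      simp [this]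
    have hsub : {i : Fin M | L p i = 0} ⊆
        (fun i : Fin M => ((i : ℕ) : ℝ)) ⁻¹' ((p : ℝ[X]).roots.toFinset : Set ℝ) := by
      intro i hi
      simp only [Set.mem_setOf_eq, L, LinearMap.comp_apply, LinearMap.pi_apply] at hi
      have hi' : (p : ℝ[X]).eval ((i : ℕ) : ℝ) = 0 := by
        simpa [Polynomial.leval_apply] using hi
      simp [Multiset.mem_toFinset, Polynomial.mem_roots, hp0, Polynomial.IsRoot, hi']
    calc {i : Fin M | L p i = 0}.ncard
        ≤ ((p : ℝ[X]).roots.toFinset : Set ℝ).ncard := by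
          exact Set.ncard_le_ncard_of_injOn (fun i : Fin M => ((i : ℕ) : ℝ))
            (fun i hi => hsub hi) hinjcast.injOn (Set.toFinite _)
      _ = (p : ℝ[X]).roots.toFinset.card := by simp [Set.ncard_coe_finset]
      _ ≤ Multiset.card (p : ℝ[X]).roots := Multiset.toFinset_card_le _
      _ ≤ (p : ℝ[X]).natDegree := Polynomial.card_roots' _
      _ < N := hfin p
end

section
/- Let 1 ≤ n < M be integers and let 0 < p ≤ q ≤ ∞ (with the convention 1/∞ = 0). Then there exists a continuous odd map c : S^n → K_q^M such that ‖c(z)‖_{ℓ_p} ≥ (M − n)^{1/p − 1/q} for all z ∈ S^n. In particular the sphere embedding width satisfies s_n(K_q^M)_{ℓ_p} ≥ (M − n)^{1/p − 1/q}. -/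
open scoped ENNReal

/-- The `ℓ_p` (quasi-)norm on `ℝ^M`, for `0 < p ≤ ∞`, with the convention that
`lpNorm ∞ x = max_i |x_i|`. -/
noncomputable def lpNorm {M : ℕ} (p : ℝ≥0∞) (x : Fin M → ℝ) : ℝ :=
  if p = ∞ then ⨆ i, |x i| else (∑ i, |x i| ^ p.toReal) ^ (1 / p.toReal)

namespace SphereLBAux

open Finset Polynomial

lemma lpNorm_top {M : ℕ} (x : Fin M → ℝ) : lpNorm ∞ x = ⨆ i, |x i| := by
  unfold lpNorm; rw [if_pos rfl]

lemma lpNorm_of_ne_top {M : ℕ} {q : ℝ≥0∞} (hq : q ≠ ∞) (x : Fin M → ℝ) :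
    lpNorm q x = (∑ i, |x i| ^ q.toReal) ^ (1 / q.toReal) := by
  unfold lpNorm; rw [if_neg hq]

/-- clamp `t` into `[-a, a]` -/
noncomputable def clamp (a t : ℝ) : ℝ := max (-a) (min a t)

lemma clamp_neg {a : ℝ} (ha : 0 ≤ a) (t : ℝ) : clamp a (-t) = -clamp a t := by
  unfold clamp
  rcases le_total a t with h1 | h1
  · rw [min_eq_left h1, max_eq_right (by linarith : -a ≤ a),
      min_eq_right (by linarith : -t ≤ a), max_eq_left (by linarith : -t ≤ -a)]
  · rcases le_total (-a) t with h2 | h2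
    · rw [min_eq_right h1, max_eq_right h2, min_eq_right (by linarith : -t ≤ a),
        max_eq_right (by linarith : -a ≤ -t)]
    · rw [min_eq_right h1, max_eq_left h2, min_eq_left (by linarith : a ≤ -t),
        max_eq_right (by linarith : -a ≤ a), neg_neg]

lemma abs_clamp_le {a : ℝ} (ha : 0 ≤ a) (t : ℝ) : |clamp a t| ≤ a := by
  unfold clamp
  rw [abs_le]
  constructor
  · exact le_max_left _ _
  · exact max_le (by linarith) (min_le_left _ _)

lemma abs_clamp_of_le {a t : ℝ} (ha : 0 ≤ a) (h : a ≤ |t|) : |clamp a t| = a := by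
  unfold clamp
  rcases abs_le.mp (le_refl |t|) with _
  rcases le_or_gt 0 t with ht | ht
  · rw [abs_of_nonneg ht] at h
    rw [min_eq_left h, max_eq_right (by linarith), abs_of_nonneg ha]
  · rw [abs_of_neg ht] at h
    rw [min_eq_right (by linarith), max_eq_left (by linarith), abs_neg, abs_of_nonneg ha]

lemma continuous_clamp (a : ℝ) : Continuous (clamp a) :=
  continuous_const.max (continuous_const.min continuous_id)

section

variable (n M : ℕ)

/-- the Vandermonde-type linear map -/
noncomputable def wmap (z : EuclideanSpace ℝ (Fin (n + 1))) : Fin M → ℝ :=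
  fun i => ∑ j : Fin (n + 1), z j * (i : ℝ) ^ (j : ℕ)

lemma wmap_neg (z : EuclideanSpace ℝ (Fin (n + 1))) :
    wmap n M (-z) = fun i => -wmap n M z i := by
  funext i
  simp [wmap, PiLp.neg_apply, neg_mul, Finset.sum_neg_distrib]

lemma continuous_wmap (i : Fin M) : Continuous fun z => wmap n M z i := by
  apply continuous_finset_sum
  intro j _
  exact ((EuclideanSpace.proj j).continuous).mul continuous_const

lemma wmap_exists_ne_zero {z : EuclideanSpace ℝ (Fin (n + 1))} (hz : z ≠ 0)
    {S : Finset (Fin M)} (hS : S.card = n + 1) : ∃ i ∈ S, wmap n M z i ≠ 0 := by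
  by_contra h
  push_neg at h
  set P : ℝ[X] := ∑ j : Fin (n + 1), Polynomial.monomial (j : ℕ) (z j) with hP
  have hdeg : P.natDegree ≤ n := by
    apply Polynomial.natDegree_sum_le_of_forall_le
    intro j _
    exact (Polynomial.natDegree_monomial_le _).trans (by omega)
  have heval : ∀ i : S, P.eval (((i : Fin M) : ℕ) : ℝ) = 0 := by
    rintro ⟨i, hi⟩
    have := h i hi
    simpa [P, Polynomial.eval_finset_sum, wmap] using this
  have hinj : Function.Injective fun i : S => (((i : Fin M) : ℕ) : ℝ) := by
    intro a b hab
    have : ((a : Fin M) : ℕ) = ((b : Fin M) : ℕ) := Nat.cast_injective hab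
    exact Subtype.ext (Fin.val_injective this)
  have hPz : P = 0 := by
    apply Polynomial.eq_zero_of_natDegree_lt_card_of_eval_eq_zero P hinj heval
    rw [Fintype.card_coe, hS]
    omega
  apply hz
  ext j
  have hc := congrArg (fun Q => Polynomial.coeff Q (j : ℕ)) hPz
  simp only [P, Polynomial.finset_sum_coeff, Polynomial.coeff_monomial,
    Polynomial.coeff_zero] at hc
  simp only [Fin.val_eq_val] at hc
  rw [Finset.sum_ite_eq' Finset.univ j (fun x => z x)] at hc
  simp only [Finset.mem_univ, if_true] at hc
  rw [hc]
  rfl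


noncomputable def lev (h : n < M) (z : EuclideanSpace ℝ (Fin (n + 1))) : ℝ :=
  ((Finset.univ : Finset (Fin M)).powersetCard (n + 1)).attach.inf'
    ((Finset.powersetCard_nonempty.mpr (by simp; omega)).attach)
    fun S => S.1.sup'
      (Finset.card_pos.mp (by rw [(Finset.mem_powersetCard.mp S.2).2]; omega))
      fun i => |wmap n M z i|

lemma lev_pos (h : n < M) {z : EuclideanSpace ℝ (Fin (n + 1))} (hz : z ≠ 0) :
    0 < lev n M h z := by
  unfold lev
  rw [Finset.lt_inf'_iff]
  intro S _
  rw [Finset.lt_sup'_iff]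
  obtain ⟨i, hi, hw⟩ := wmap_exists_ne_zero n M hz (Finset.mem_powersetCard.mp S.2).2
  exact ⟨i, hi, abs_pos.mpr hw⟩

lemma lev_nonneg (h : n < M) (z : EuclideanSpace ℝ (Fin (n + 1))) :
    0 ≤ lev n M h z := by
  unfold lev
  rw [Finset.le_inf'_iff]
  intro S _
  obtain ⟨i, hi⟩ := Finset.card_pos.mp
    (by rw [(Finset.mem_powersetCard.mp S.2).2]; omega : 0 < S.1.card)
  exact Finset.le_sup'_of_le _ hi (abs_nonneg _)

lemma lev_neg (h : n < M) (z : EuclideanSpace ℝ (Fin (n + 1))) :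
    lev n M h (-z) = lev n M h z := by
  unfold lev
  congr 1
  funext S
  congr 1
  funext i
  rw [wmap_neg]
  simp

lemma continuous_lev (h : n < M) : Continuous (lev n M h) := by
  apply Continuous.finset_inf'_apply
  intro S _
  apply Continuous.finset_sup'_apply
  intro i _
  exact (continuous_wmap n M i).abs

lemma card_le_filter (h : n < M) {z : EuclideanSpace ℝ (Fin (n + 1))} (hz : z ≠ 0) :
    M - n ≤ (Finset.univ.filter fun i => lev n M h z ≤ |wmap n M z i|).card := by
  classical
  by_contra hc
  push_neg at hc
  have key := Finset.card_filter_add_card_filter_not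
    (s := (Finset.univ : Finset (Fin M))) (p := fun i => lev n M h z ≤ |wmap n M z i|)
  simp only [not_le, Finset.card_univ, Fintype.card_fin] at key
  have hcompl : n + 1 ≤ (Finset.univ.filter fun i => |wmap n M z i| < lev n M h z).card := by
    omega
  obtain ⟨S, hSsub, hScard⟩ := Finset.exists_subset_card_eq hcompl
  have hSmem : S ∈ (Finset.univ : Finset (Fin M)).powersetCard (n + 1) :=
    Finset.mem_powersetCard.mpr ⟨Finset.subset_univ _, hScard⟩
  have h1 : lev n M h z ≤ S.sup'
      (Finset.card_pos.mp (by rw [hScard]; omega)) (fun i => |wmap n M z i|) := by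
    have := Finset.inf'_le (s := ((Finset.univ : Finset (Fin M)).powersetCard (n + 1)).attach)
      (fun S' => S'.1.sup'
        (Finset.card_pos.mp (by rw [(Finset.mem_powersetCard.mp S'.2).2]; omega))
        fun i => |wmap n M z i|)
      (Finset.mem_attach _ ⟨S, hSmem⟩)
    exact this
  have h2 : S.sup' (Finset.card_pos.mp (by rw [hScard]; omega))
      (fun i => |wmap n M z i|) < lev n M h z := by
    rw [Finset.sup'_lt_iff]
    intro i hi
    exact (Finset.mem_filter.mp (hSsub hi)).2
  exact absurd (h1.trans_lt h2) (lt_irrefl _)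

noncomputable def ymap (h : n < M) (z : EuclideanSpace ℝ (Fin (n + 1))) : Fin M → ℝ :=
  fun i => clamp (lev n M h z) (wmap n M z i)

lemma ymap_neg (h : n < M) (z : EuclideanSpace ℝ (Fin (n + 1))) :
    ymap n M h (-z) = fun i => -(ymap n M h z i) := by
  funext i
  unfold ymap
  rw [lev_neg, wmap_neg]
  exact clamp_neg (lev_nonneg n M h z) _

lemma continuous_ymap (h : n < M) (i : Fin M) :
    Continuous fun z => ymap n M h z i := by
  unfold ymap clamp
  exact (continuous_lev n M h).neg.max
    ((continuous_lev n M h).min (continuous_wmap n M i))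


lemma key {M : ℕ} (p q : ℝ≥0∞) (hp : 0 < p) (hpq : p ≤ q) (m : ℕ) (hm : 1 ≤ m)
    (x : Fin M → ℝ) (A : ℝ) (hA : 0 < A) (hle : ∀ i, |x i| ≤ A)
    (T : Finset (Fin M)) (hTcard : m ≤ T.card) (hTeq : ∀ i ∈ T, |x i| = A) :
    0 < lpNorm q x ∧ lpNorm q (fun i => x i / lpNorm q x) ≤ 1 ∧
      (m : ℝ) ^ (p.toReal⁻¹ - q.toReal⁻¹) ≤ lpNorm p (fun i => x i / lpNorm q x) := by
  obtain ⟨i0, hi0⟩ : T.Nonempty := Finset.card_pos.mp (by omega)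
  have hm' : (1 : ℝ) ≤ (m : ℝ) := by exact_mod_cast hm
  by_cases hq : q = ∞
  · -- q = ∞ case: the norm is the sup, which equals A
    subst hq
    haveI : Nonempty (Fin M) := ⟨i0⟩
    have hbdd : BddAbove (Set.range fun i => |x i|) := Set.Finite.bddAbove (Set.finite_range _)
    have hNA : lpNorm ∞ x = A := by
      rw [lpNorm_top x]
      refine le_antisymm (ciSup_le hle) ?_
      rw [← hTeq i0 hi0]
      exact le_ciSup hbdd i0
    have hNpos : 0 < lpNorm ∞ x := hNA ▸ hA
    refine ⟨hNpos, ?_, ?_⟩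
    · rw [lpNorm_top (fun i => x i / lpNorm ∞ x)]
      apply ciSup_le
      intro i
      rw [hNA, abs_div, abs_of_pos hA]
      exact (div_le_one hA).mpr (hle i)
    · have hq0 : (∞ : ℝ≥0∞).toReal⁻¹ = 0 := by simp
      by_cases hpinf : p = ∞
      · subst hpinf
        rw [hq0, sub_zero, Real.rpow_zero]
        rw [lpNorm_top (fun i => x i / lpNorm ∞ x)]
        have h1 : |x i0 / lpNorm ∞ x| = 1 := by
          rw [abs_div, abs_of_pos hNpos, hNA, hTeq i0 hi0, div_self hA.ne']
        calc (1 : ℝ) = |x i0 / lpNorm ∞ x| := h1.symm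
          _ ≤ ⨆ i, |x i / lpNorm ∞ x| :=
            le_ciSup (f := fun i => |x i / lpNorm ∞ x|)
              (Set.Finite.bddAbove (Set.finite_range _)) i0
      · have hpr : 0 < p.toReal := ENNReal.toReal_pos hp.ne' hpinf
        rw [hq0, sub_zero]
        rw [lpNorm_of_ne_top hpinf (fun i => x i / lpNorm ∞ x)]
        have hsum : (m : ℝ) ≤ ∑ i, |x i / lpNorm ∞ x| ^ p.toReal := by
          calc (m : ℝ) ≤ (T.card : ℝ) := by exact_mod_cast hTcard
            _ = ∑ _i ∈ T, (1 : ℝ) := by simp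
            _ = ∑ i ∈ T, |x i / lpNorm ∞ x| ^ p.toReal := by
                refine Finset.sum_congr rfl fun i hi => ?_
                rw [abs_div, abs_of_pos hNpos, hNA, hTeq i hi, div_self hA.ne',
                  Real.one_rpow]
            _ ≤ ∑ i, |x i / lpNorm ∞ x| ^ p.toReal :=
                Finset.sum_le_sum_of_subset_of_nonneg (Finset.subset_univ T)
                  (fun i _ _ => Real.rpow_nonneg (abs_nonneg _) _)
        calc (m : ℝ) ^ p.toReal⁻¹ ≤ (∑ i, |x i / lpNorm ∞ x| ^ p.toReal) ^ p.toReal⁻¹ :=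
            Real.rpow_le_rpow (by positivity) hsum (by positivity)
          _ = (∑ i, |x i / lpNorm ∞ x| ^ p.toReal) ^ (1 / p.toReal) := by rw [one_div]
  · -- q < ∞ case
    have hpinf : p ≠ ∞ := fun h => hq (top_le_iff.mp (h ▸ hpq))
    have hpr : 0 < p.toReal := ENNReal.toReal_pos hp.ne' hpinf
    have hqr : 0 < q.toReal := ENNReal.toReal_pos (lt_of_lt_of_le hp hpq).ne' hq
    have hprqr : p.toReal ≤ q.toReal := ENNReal.toReal_mono hq hpq
    set pr := p.toReal with hprdef
    set qr := q.toReal with hqrdef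
    set Sp := ∑ i, |x i| ^ pr with hSpdef
    set Sq := ∑ i, |x i| ^ qr with hSqdef
    have hSp_lb : (m : ℝ) * A ^ pr ≤ Sp := by
      calc (m : ℝ) * A ^ pr ≤ (T.card : ℝ) * A ^ pr := by
            apply mul_le_mul_of_nonneg_right (by exact_mod_cast hTcard) (by positivity)
        _ = ∑ _i ∈ T, A ^ pr := by rw [Finset.sum_const, nsmul_eq_mul]
        _ = ∑ i ∈ T, |x i| ^ pr := by
            refine Finset.sum_congr rfl fun i hi => ?_
            rw [hTeq i hi]
        _ ≤ Sp := Finset.sum_le_sum_of_subset_of_nonneg (Finset.subset_univ T)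
            (fun i _ _ => Real.rpow_nonneg (abs_nonneg _) _)
    have hSp_pos : 0 < Sp := lt_of_lt_of_le (by positivity) hSp_lb
    have hSq_pos : 0 < Sq := by
      have h1 : 0 < |x i0| ^ qr := by
        rw [hTeq i0 hi0]; positivity
      exact lt_of_lt_of_le h1 (Finset.single_le_sum
        (fun i _ => Real.rpow_nonneg (abs_nonneg _) _) (Finset.mem_univ i0))
    have hN : lpNorm q x = Sq ^ (1 / qr) := lpNorm_of_ne_top hq x
    have hNpos : 0 < lpNorm q x := by
      rw [hN]; exact Real.rpow_pos_of_pos hSq_pos _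
    set N := lpNorm q x with hNdef
    have hNqr : N ^ qr = Sq := by
      rw [hN, ← Real.rpow_mul hSq_pos.le, one_div_mul_cancel hqr.ne', Real.rpow_one]
    have habs : ∀ i, |x i / N| = |x i| / N := by
      intro i
      rw [abs_div, abs_of_pos hNpos]
    refine ⟨hNpos, ?_, ?_⟩
    · rw [lpNorm_of_ne_top hq (fun i => x i / N)]
      have hone : ∑ i, |x i / N| ^ qr = 1 := by
        have heq : ∀ i, |x i / N| ^ qr = |x i| ^ qr / N ^ qr := by
          intro i
          rw [habs i, Real.div_rpow (abs_nonneg _) hNpos.le]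
        rw [Finset.sum_congr rfl fun i _ => heq i, ← Finset.sum_div, hNqr, ← hSqdef,
          div_self hSq_pos.ne']
      rw [hone, Real.one_rpow]
    · -- main lower bound
      have hsum_p : ∑ i, |x i / N| ^ pr = Sp / N ^ pr := by
        have heq : ∀ i, |x i / N| ^ pr = |x i| ^ pr / N ^ pr := by
          intro i
          rw [habs i, Real.div_rpow (abs_nonneg _) hNpos.le]
        rw [Finset.sum_congr rfl fun i _ => heq i, ← Finset.sum_div]
      have hlp : lpNorm p (fun i => x i / N) = Sp ^ (1 / pr) / N := by
        rw [lpNorm_of_ne_top hpinf (fun i => x i / N), hsum_p,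
          Real.div_rpow hSp_pos.le (by positivity),
          ← Real.rpow_mul hNpos.le, mul_one_div, div_self hpr.ne', Real.rpow_one]
      rw [hlp]
      -- key chain inequality
      have hstep1 : Sq ≤ Sp * A ^ (qr - pr) := by
        have hterm : ∀ i, |x i| ^ qr ≤ |x i| ^ pr * A ^ (qr - pr) := by
          intro i
          rcases eq_or_lt_of_le (abs_nonneg (x i)) with h0 | h0
          · rw [← h0, Real.zero_rpow hqr.ne']
            positivity
          · have hsplit : |x i| ^ qr = |x i| ^ pr * |x i| ^ (qr - pr) := by
              rw [← Real.rpow_add h0]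
              congr 1
              ring
            rw [hsplit]
            exact mul_le_mul_of_nonneg_left
              (Real.rpow_le_rpow (abs_nonneg _) (hle i) (by linarith))
              (Real.rpow_nonneg (abs_nonneg _) _)
        calc Sq ≤ ∑ i, |x i| ^ pr * A ^ (qr - pr) := Finset.sum_le_sum fun i _ => hterm i
          _ = Sp * A ^ (qr - pr) := by rw [← Finset.sum_mul]
      set B := A ^ (qr - pr) with hBdef
      have hBpos : 0 < B := by positivity
      have hX : (m : ℝ) ^ (qr - pr) * Sq ^ pr ≤ Sp ^ qr := by
        have h1 : Sq ^ pr ≤ Sp ^ pr * B ^ pr := by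
          rw [← Real.mul_rpow hSp_pos.le hBpos.le]
          exact Real.rpow_le_rpow hSq_pos.le hstep1 hpr.le
        have h2 : (m : ℝ) ^ (qr - pr) * B ^ pr ≤ Sp ^ (qr - pr) := by
          have hmB : (m : ℝ) ^ (qr - pr) * B ^ pr = ((m : ℝ) * A ^ pr) ^ (qr - pr) := by
            rw [Real.mul_rpow (by positivity) (by positivity), hBdef,
              ← Real.rpow_mul hA.le, ← Real.rpow_mul hA.le, mul_comm (qr - pr) pr]
          rw [hmB]
          exact Real.rpow_le_rpow (by positivity) hSp_lb (by linarith)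
        calc (m : ℝ) ^ (qr - pr) * Sq ^ pr
            ≤ (m : ℝ) ^ (qr - pr) * (Sp ^ pr * B ^ pr) :=
              mul_le_mul_of_nonneg_left h1 (by positivity)
          _ = Sp ^ pr * ((m : ℝ) ^ (qr - pr) * B ^ pr) := by ring
          _ ≤ Sp ^ pr * Sp ^ (qr - pr) := mul_le_mul_of_nonneg_left h2 (by positivity)
          _ = Sp ^ qr := by rw [← Real.rpow_add hSp_pos]; ring_nf
      -- raise to the power 1/(pr*qr)
      have hY := Real.rpow_le_rpow (by positivity) hX
        (by positivity : (0:ℝ) ≤ 1 / (pr * qr))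
      rw [Real.mul_rpow (by positivity) (by positivity),
        ← Real.rpow_mul (by positivity : (0:ℝ) ≤ (m:ℝ)),
        ← Real.rpow_mul hSq_pos.le, ← Real.rpow_mul hSp_pos.le] at hY
      have e1 : (qr - pr) * (1 / (pr * qr)) = pr⁻¹ - qr⁻¹ := by
        field_simp
      have e2 : pr * (1 / (pr * qr)) = 1 / qr := by
        field_simp
      have e3 : qr * (1 / (pr * qr)) = 1 / pr := by
        field_simp
      rw [e1, e2, e3] at hY
      rw [le_div_iff₀ hNpos, hN]
      exact hY


lemma abs_ymap_le (h : n < M) (z : EuclideanSpace ℝ (Fin (n + 1))) (i : Fin M) :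
    |ymap n M h z i| ≤ lev n M h z := by
  unfold ymap
  exact abs_clamp_le (lev_nonneg n M h z) _

lemma abs_ymap_eq (h : n < M) (z : EuclideanSpace ℝ (Fin (n + 1))) {i : Fin M}
    (hi : lev n M h z ≤ |wmap n M z i|) : |ymap n M h z i| = lev n M h z := by
  unfold ymap
  exact abs_clamp_of_le (lev_nonneg n M h z) hi

lemma lpNorm_neg {M : ℕ} (q : ℝ≥0∞) (v : Fin M → ℝ) :
    lpNorm q (fun i => -(v i)) = lpNorm q v := by
  unfold lpNorm
  simp [abs_neg]

end

end SphereLBAux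

/-- **Lower bound for the sphere embedding widths of `ℓ_q^M`-balls**
(Proposition `sphere-embedding-lq-lower-bounds-prop`). For `1 ≤ n < M` and
`0 < p ≤ q ≤ ∞` there is a continuous odd map `c` from the unit sphere `S^n` into the
`ℓ_q^M` unit ball with `‖c z‖_{ℓ_p} ≥ (M - n)^(1/p - 1/q)` for all `z ∈ S^n`; in
particular `s_n(K_q^M)_{ℓ_p} ≥ (M - n)^(1/p - 1/q)`. -/
theorem sphere_embedding_lq_ball_lower (n M : ℕ) (hn : 1 ≤ n) (hnM : n < M)
    (p q : ℝ≥0∞) (hp : 0 < p) (hpq : p ≤ q) :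
    ∃ c : EuclideanSpace ℝ (Fin (n + 1)) → Fin M → ℝ,
      ContinuousOn c (Metric.sphere (0 : EuclideanSpace ℝ (Fin (n + 1))) 1) ∧
      (∀ z ∈ Metric.sphere (0 : EuclideanSpace ℝ (Fin (n + 1))) 1, c (-z) = -c z) ∧
      (∀ z ∈ Metric.sphere (0 : EuclideanSpace ℝ (Fin (n + 1))) 1, lpNorm q (c z) ≤ 1) ∧
      ∀ z ∈ Metric.sphere (0 : EuclideanSpace ℝ (Fin (n + 1))) 1,
        ((M : ℝ) - (n : ℝ)) ^ (p.toReal⁻¹ - q.toReal⁻¹) ≤ lpNorm p (c z) := by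
  classical
  haveI : Nonempty (Fin M) := ⟨⟨0, by omega⟩⟩
  set y := SphereLBAux.ymap n M hnM with hy
  set c : EuclideanSpace ℝ (Fin (n + 1)) → Fin M → ℝ :=
    fun z i => y z i / lpNorm q (y z) with hc
  have main : ∀ z ∈ Metric.sphere (0 : EuclideanSpace ℝ (Fin (n + 1))) 1,
      0 < lpNorm q (y z) ∧ lpNorm q (c z) ≤ 1 ∧
        ((M - n : ℕ) : ℝ) ^ (p.toReal⁻¹ - q.toReal⁻¹) ≤ lpNorm p (c z) := by
    intro z hz
    have hz0 : z ≠ 0 := by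
      intro h
      rw [h] at hz
      simp at hz
    exact SphereLBAux.key p q hp hpq (M - n) (by omega) (y z)
      (SphereLBAux.lev n M hnM z) (SphereLBAux.lev_pos n M hnM hz0)
      (SphereLBAux.abs_ymap_le n M hnM z)
      (Finset.univ.filter fun i => SphereLBAux.lev n M hnM z ≤ |SphereLBAux.wmap n M z i|)
      (SphereLBAux.card_le_filter n M hnM hz0)
      (fun i hi => SphereLBAux.abs_ymap_eq n M hnM z (Finset.mem_filter.mp hi).2)
  have hcontN : Continuous fun z => lpNorm q (y z) := by
    by_cases hqt : q = ∞
    · subst hqt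
      have heq : (fun z => lpNorm ∞ (y z)) =
          fun z => Finset.univ.sup' Finset.univ_nonempty fun i => |y z i| := by
        funext z
        rw [SphereLBAux.lpNorm_top, ← Finset.sup'_univ_eq_ciSup]
      rw [heq]
      exact Continuous.finset_sup'_apply _ fun i _ =>
        (SphereLBAux.continuous_ymap n M hnM i).abs
    · have heq : (fun z => lpNorm q (y z)) =
          fun z => (∑ i, |y z i| ^ q.toReal) ^ (1 / q.toReal) := by
        funext z
        rw [SphereLBAux.lpNorm_of_ne_top hqt]
      rw [heq]
      apply Continuous.rpow_const
      · apply continuous_finset_sum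
        intro i _
        exact Continuous.rpow_const (SphereLBAux.continuous_ymap n M hnM i).abs
          fun _ => Or.inr ENNReal.toReal_nonneg
      · intro _
        right
        positivity
  refine ⟨c, ?_, ?_, fun z hz => (main z hz).2.1, ?_⟩
  · rw [continuousOn_pi]
    intro i
    apply ContinuousOn.div
    · exact (SphereLBAux.continuous_ymap n M hnM i).continuousOn
    · exact hcontN.continuousOn
    · intro z hz
      exact (main z hz).1.ne'
  · intro z _
    funext i
    show y (-z) i / lpNorm q (y (-z)) = _
    have h1 : y (-z) = fun j => -(y z j) := SphereLBAux.ymap_neg n M hnM z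
    rw [h1, SphereLBAux.lpNorm_neg q (y z)]
    simp [hc, neg_div]
  · intro z hz
    have := (main z hz).2.2
    rwa [Nat.cast_sub hnM.le] at this
end

section
/- Let 1 ≤ q < ∞, let k ≥ 1 be an integer, and let f_1, …, f_M ∈ L_q(ℝ^d) have pairwise disjoint supports. Then for all a ∈ ℝ^M, all h ∈ ℝ^d, and all t > 0 with |h| ≤ t, one has ‖Δ_h^k(Σ_{i=1}^M a_i f_i)‖_{L_q(ℝ^d)}^q ≤ (k+1)^{q−1} Σ_{i=1}^M |a_i|^q ‖Δ_h^k f_i‖_{L_q(ℝ^d)}^q, and consequently ω_k(Σ_{i=1}^M a_i f_i, t)_q^q ≤ (k+1)^{q−1} Σ_{i=1}^M |a_i|^q ω_k(f_i, t)_q^q. -/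
open MeasureTheory
open scoped ENNReal NNReal

/-- The `k`-th order finite difference `Δ_h^k f (x) = Σ_{j=0}^k (-1)^j C(k,j) f(x + j h)`. -/
noncomputable def finDiff {d : ℕ} (k : ℕ) (h : Fin d → ℝ) (f : (Fin d → ℝ) → ℝ) :
    (Fin d → ℝ) → ℝ :=
  fun x => ∑ j ∈ Finset.range (k + 1), (-1 : ℝ) ^ j * (k.choose j : ℝ) * f (x + (j : ℝ) • h)

/-- The `k`-th order modulus of smoothness on `ℝ^d`:
`ω_k(f, t)_q = sup_{|h| ≤ t} ‖Δ_h^k f‖_{L_q(ℝ^d)}` (valued in `ℝ≥0∞`). -/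
noncomputable def modulus {d : ℕ} (k : ℕ) (q : ℝ≥0∞) (f : (Fin d → ℝ) → ℝ) (t : ℝ) : ℝ≥0∞ :=
  ⨆ h : {h : Fin d → ℝ // ‖h‖ ≤ t}, eLpNorm (finDiff k h.1 f) q volume

private lemma aux_rpow_sum_le {ι : Type*} (s : Finset ι) (z : ι → ℝ≥0∞) {q : ℝ} (hq : 1 ≤ q) :
    (∑ i ∈ s, z i) ^ q ≤ (s.card : ℝ≥0∞) ^ (q - 1) * ∑ i ∈ s, z i ^ q := by
  rcases s.eq_empty_or_nonempty with rfl | hs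
  · simp [ENNReal.zero_rpow_of_pos (lt_of_lt_of_le one_pos hq)]
  have hn0 : (s.card : ℝ≥0∞) ≠ 0 := by simpa using hs.card_pos.ne'
  have hnt : (s.card : ℝ≥0∞) ≠ ⊤ := by simp
  have key := ENNReal.rpow_arith_mean_le_arith_mean_rpow (s := s)
    (fun _ => (s.card : ℝ≥0∞)⁻¹) z (by
      rw [Finset.sum_const, nsmul_eq_mul, ENNReal.mul_inv_cancel hn0 hnt]) hq
  have h1 : (∑ i ∈ s, (s.card : ℝ≥0∞)⁻¹ * z i) = (s.card : ℝ≥0∞)⁻¹ * ∑ i ∈ s, z i := by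
    rw [Finset.mul_sum]
  have h2 : (∑ i ∈ s, (s.card : ℝ≥0∞)⁻¹ * z i ^ q) = (s.card : ℝ≥0∞)⁻¹ * ∑ i ∈ s, z i ^ q := by
    rw [Finset.mul_sum]
  rw [h1, h2, ENNReal.mul_rpow_of_nonneg _ _ (by linarith)] at key
  calc (∑ i ∈ s, z i) ^ q
      = (s.card : ℝ≥0∞) ^ q * (((s.card : ℝ≥0∞)⁻¹) ^ q * (∑ i ∈ s, z i) ^ q) := by
        rw [← mul_assoc, ← ENNReal.mul_rpow_of_nonneg _ _ (by linarith),
          ENNReal.mul_inv_cancel hn0 hnt, ENNReal.one_rpow, one_mul]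
    _ ≤ (s.card : ℝ≥0∞) ^ q * ((s.card : ℝ≥0∞)⁻¹ * ∑ i ∈ s, z i ^ q) :=
        mul_le_mul_right key _
    _ = (s.card : ℝ≥0∞) ^ (q - 1) * ∑ i ∈ s, z i ^ q := by
        rw [← mul_assoc]
        congr 1
        rw [← ENNReal.rpow_neg_one, ← ENNReal.rpow_add _ _ hn0 hnt, sub_eq_add_neg]

private lemma aux_finDiff_aesm {d k : ℕ} (h : Fin d → ℝ) (f : (Fin d → ℝ) → ℝ)
    (hf : AEStronglyMeasurable f (volume : Measure (Fin d → ℝ))) :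
    AEStronglyMeasurable (finDiff k h f) volume := by
  unfold finDiff
  apply Finset.aestronglyMeasurable_fun_sum
  intro j _
  apply AEStronglyMeasurable.const_mul
  exact hf.comp_quasiMeasurePreserving
    (measurePreserving_add_right volume ((j : ℝ) • h)).quasiMeasurePreserving

private lemma aux_finDiff_linear {d k M : ℕ} (h : Fin d → ℝ) (f : Fin M → (Fin d → ℝ) → ℝ)
    (a : Fin M → ℝ) (x : Fin d → ℝ) :
    finDiff k h (fun y => ∑ i, a i * f i y) x = ∑ i, a i * finDiff k h (f i) x := by
  unfold finDiff
  simp only [Finset.mul_sum]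
  rw [Finset.sum_comm]
  exact Finset.sum_congr rfl fun i _ => Finset.sum_congr rfl fun j _ => by ring

private lemma aux_card_le {d M k : ℕ} {h : Fin d → ℝ} {f : Fin M → (Fin d → ℝ) → ℝ}
    (hdisj : Pairwise fun i j => Disjoint (Function.support (f i)) (Function.support (f j)))
    (x : Fin d → ℝ) :
    (Finset.univ.filter fun i => finDiff k h (f i) x ≠ 0).card ≤ k + 1 := by
  classical
  set S := Finset.univ.filter fun i => finDiff k h (f i) x ≠ 0 with hS
  have hex : ∀ i ∈ S, ∃ j, j ∈ Finset.range (k + 1) ∧ f i (x + (j : ℝ) • h) ≠ 0 := by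
    intro i hi
    rw [hS, Finset.mem_filter] at hi
    obtain ⟨j, hj, hne⟩ := Finset.exists_ne_zero_of_sum_ne_zero hi.2
    refine ⟨j, hj, fun h0 => hne ?_⟩
    simp [h0]
  have hcard := Finset.card_le_card_of_injOn (s := S) (t := Finset.range (k + 1))
    (fun i => if hi : i ∈ S then (hex i hi).choose else 0) ?_ ?_
  · simpa using hcard
  · intro i hi
    simp only [Finset.mem_coe] at hi ⊢
    simp only [hi, dif_pos]
    exact (hex i hi).choose_spec.1
  · intro i hi i' hi' hii
    simp only [Finset.mem_coe] at hi hi'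
    simp only [hi, hi', dif_pos] at hii
    by_contra hne
    have h1 : x + ((hex i hi).choose : ℝ) • h ∈ Function.support (f i) :=
      (hex i hi).choose_spec.2
    have h2 : x + ((hex i hi).choose : ℝ) • h ∈ Function.support (f i') := by
      rw [hii]; exact (hex i' hi').choose_spec.2
    exact Set.disjoint_left.mp (hdisj hne) h1 h2

private lemma aux_eLpNorm_rpow {d : ℕ} (g : (Fin d → ℝ) → ℝ) {q : ℝ} (hq : 1 ≤ q) :
    eLpNorm g (ENNReal.ofReal q) volume ^ q = ∫⁻ x, (‖g x‖₊ : ℝ≥0∞) ^ q := by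
  have hq0 : 0 < q := lt_of_lt_of_le one_pos hq
  rw [eLpNorm_eq_lintegral_rpow_enorm_toReal (ENNReal.ofReal_pos.mpr hq0).ne'
    (by simp), ENNReal.toReal_ofReal hq0.le, one_div, ENNReal.rpow_inv_rpow hq0.ne']
  rfl

private lemma aux_pointwise {d M k : ℕ} {h : Fin d → ℝ} {f : Fin M → (Fin d → ℝ) → ℝ}
    (hdisj : Pairwise fun i j => Disjoint (Function.support (f i)) (Function.support (f j)))
    (a : Fin M → ℝ) {q : ℝ} (hq : 1 ≤ q) (x : Fin d → ℝ) :
    (‖finDiff k h (fun y => ∑ i, a i * f i y) x‖₊ : ℝ≥0∞) ^ q ≤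
      ((k : ℝ≥0∞) + 1) ^ (q - 1) *
        ∑ i, ENNReal.ofReal (|a i| ^ q) * (‖finDiff k h (f i) x‖₊ : ℝ≥0∞) ^ q := by
  have hq0 : (0 : ℝ) ≤ q := le_trans zero_le_one hq
  set u : Fin M → ℝ := fun i => finDiff k h (f i) x with hu
  set S := Finset.univ.filter fun i => u i ≠ 0 with hS
  have hsum : finDiff k h (fun y => ∑ i, a i * f i y) x = ∑ i ∈ S, a i * u i := by
    rw [aux_finDiff_linear]
    refine (Finset.sum_subset (Finset.filter_subset _ _) ?_).symm
    intro i _ hi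
    simp only [Finset.mem_filter, Finset.mem_univ, true_and, not_not] at hi
    exact mul_eq_zero_of_right _ hi
  calc (‖finDiff k h (fun y => ∑ i, a i * f i y) x‖₊ : ℝ≥0∞) ^ q
      = (‖∑ i ∈ S, a i * u i‖₊ : ℝ≥0∞) ^ q := by rw [hsum]
    _ ≤ (∑ i ∈ S, (‖a i‖₊ : ℝ≥0∞) * (‖u i‖₊ : ℝ≥0∞)) ^ q := by
        apply ENNReal.rpow_le_rpow _ hq0
        have h1 : ‖∑ i ∈ S, a i * u i‖₊ ≤ ∑ i ∈ S, ‖a i‖₊ * ‖u i‖₊ :=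
          (nnnorm_sum_le _ _).trans
            (le_of_eq (Finset.sum_congr rfl fun i _ => nnnorm_mul _ _))
        calc (‖∑ i ∈ S, a i * u i‖₊ : ℝ≥0∞)
            ≤ ((∑ i ∈ S, ‖a i‖₊ * ‖u i‖₊ : ℝ≥0) : ℝ≥0∞) := ENNReal.coe_le_coe.2 h1
          _ = ∑ i ∈ S, (‖a i‖₊ : ℝ≥0∞) * (‖u i‖₊ : ℝ≥0∞) := by push_cast; rfl
    _ ≤ (S.card : ℝ≥0∞) ^ (q - 1) *
          ∑ i ∈ S, ((‖a i‖₊ : ℝ≥0∞) * (‖u i‖₊ : ℝ≥0∞)) ^ q := aux_rpow_sum_le S _ hq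
    _ ≤ ((k : ℝ≥0∞) + 1) ^ (q - 1) *
          ∑ i, ((‖a i‖₊ : ℝ≥0∞) * (‖u i‖₊ : ℝ≥0∞)) ^ q := by
        apply mul_le_mul'
        · apply ENNReal.rpow_le_rpow _ (by linarith)
          have := aux_card_le (k := k) (h := h) hdisj x
          calc (S.card : ℝ≥0∞) ≤ ((k + 1 : ℕ) : ℝ≥0∞) := by exact_mod_cast this
            _ = (k : ℝ≥0∞) + 1 := by push_cast; rfl
        · exact Finset.sum_le_sum_of_subset (Finset.filter_subset _ _)
    _ = ((k : ℝ≥0∞) + 1) ^ (q - 1) *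
          ∑ i, ENNReal.ofReal (|a i| ^ q) * (‖u i‖₊ : ℝ≥0∞) ^ q := by
        congr 1
        refine Finset.sum_congr rfl fun i _ => ?_
        rw [ENNReal.mul_rpow_of_nonneg _ _ hq0]
        congr 1
        rw [← ENNReal.ofReal_rpow_of_nonneg (abs_nonneg _) hq0,
          ← Real.enorm_eq_ofReal_abs, enorm_eq_nnnorm]

private lemma aux_key {d M k : ℕ} {f : Fin M → (Fin d → ℝ) → ℝ} {q : ℝ} (hq : 1 ≤ q)
    (hmem : ∀ i, MemLp (f i) (ENNReal.ofReal q) volume)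
    (hdisj : Pairwise fun i j => Disjoint (Function.support (f i)) (Function.support (f j)))
    (a : Fin M → ℝ) (h : Fin d → ℝ) :
    eLpNorm (finDiff k h (fun x => ∑ i, a i * f i x)) (ENNReal.ofReal q) volume ^ q ≤
      ((k : ℝ≥0∞) + 1) ^ (q - 1) *
        ∑ i, ENNReal.ofReal (|a i| ^ q) *
          eLpNorm (finDiff k h (f i)) (ENNReal.ofReal q) volume ^ q := by
  have hq0 : (0 : ℝ) ≤ q := le_trans zero_le_one hq
  rw [aux_eLpNorm_rpow _ hq]
  have hmeas : ∀ i : Fin M, AEMeasurable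
      (fun x => (‖finDiff k h (f i) x‖₊ : ℝ≥0∞) ^ q) volume := fun i =>
    (aux_finDiff_aesm h (f i) (hmem i).1).enorm.pow_const _
  calc (∫⁻ x, (‖finDiff k h (fun y => ∑ i, a i * f i y) x‖₊ : ℝ≥0∞) ^ q)
      ≤ ∫⁻ x, ((k : ℝ≥0∞) + 1) ^ (q - 1) *
          ∑ i, ENNReal.ofReal (|a i| ^ q) * (‖finDiff k h (f i) x‖₊ : ℝ≥0∞) ^ q :=
        lintegral_mono fun x => aux_pointwise hdisj a hq x
    _ = ((k : ℝ≥0∞) + 1) ^ (q - 1) *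
          ∫⁻ x, ∑ i, ENNReal.ofReal (|a i| ^ q) * (‖finDiff k h (f i) x‖₊ : ℝ≥0∞) ^ q :=
        lintegral_const_mul' _ _ (by simp [ENNReal.rpow_eq_top_iff])
    _ = ((k : ℝ≥0∞) + 1) ^ (q - 1) *
          ∑ i, ENNReal.ofReal (|a i| ^ q) *
            ∫⁻ x, (‖finDiff k h (f i) x‖₊ : ℝ≥0∞) ^ q := by
        rw [lintegral_finset_sum' _ fun i _ => (hmeas i).const_mul _]
        congr 1
        exact Finset.sum_congr rfl fun i _ =>
          lintegral_const_mul' _ _ ENNReal.ofReal_ne_top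
    _ = _ := by
        congr 1
        exact Finset.sum_congr rfl fun i _ => by rw [aux_eLpNorm_rpow _ hq]

/-- For `1 ≤ q < ∞`, `k ≥ 1` and `f₁, …, f_M ∈ L_q(ℝ^d)` with pairwise disjoint supports:
for all `a ∈ ℝ^M` and all `h, t` with `0 < t` and `|h| ≤ t`,
`‖Δ_h^k (Σ aᵢ fᵢ)‖_q^q ≤ (k+1)^{q-1} Σ |aᵢ|^q ‖Δ_h^k fᵢ‖_q^q`, and consequently
`ω_k(Σ aᵢ fᵢ, t)_q^q ≤ (k+1)^{q-1} Σ |aᵢ|^q ω_k(fᵢ, t)_q^q`. -/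
theorem finDiff_modulus_disjoint_supports (d M k : ℕ) (hd : 1 ≤ d) (hk : 1 ≤ k)
    (q : ℝ) (hq : 1 ≤ q) (f : Fin M → (Fin d → ℝ) → ℝ)
    (hmem : ∀ i, MemLp (f i) (ENNReal.ofReal q) volume)
    (hdisj : Pairwise fun i j => Disjoint (Function.support (f i)) (Function.support (f j)))
    (a : Fin M → ℝ) (h : Fin d → ℝ) (t : ℝ) (ht : 0 < t) (hht : ‖h‖ ≤ t) :
    (eLpNorm (finDiff k h (fun x => ∑ i, a i * f i x)) (ENNReal.ofReal q) volume ^ q ≤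
        ((k : ℝ≥0∞) + 1) ^ (q - 1) *
          ∑ i, ENNReal.ofReal (|a i| ^ q) *
            eLpNorm (finDiff k h (f i)) (ENNReal.ofReal q) volume ^ q) ∧
      modulus k (ENNReal.ofReal q) (fun x => ∑ i, a i * f i x) t ^ q ≤
        ((k : ℝ≥0∞) + 1) ^ (q - 1) *
          ∑ i, ENNReal.ofReal (|a i| ^ q) * modulus k (ENNReal.ofReal q) (f i) t ^ q := by
  have hq0 : (0 : ℝ) < q := lt_of_lt_of_le one_pos hq
  refine ⟨aux_key hq hmem hdisj a h, ?_⟩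
  set C : ℝ≥0∞ := ((k : ℝ≥0∞) + 1) ^ (q - 1) *
    ∑ i, ENNReal.ofReal (|a i| ^ q) * modulus k (ENNReal.ofReal q) (f i) t ^ q with hC
  have hsup : modulus k (ENNReal.ofReal q) (fun x => ∑ i, a i * f i x) t ≤ C ^ (1 / q) := by
    apply iSup_le
    rintro ⟨h', hh'⟩
    have hb : eLpNorm (finDiff k h' (fun x => ∑ i, a i * f i x)) (ENNReal.ofReal q) volume ^ q
        ≤ C := by
      refine le_trans (aux_key hq hmem hdisj a h') ?_
      rw [hC]
      apply mul_le_mul_right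
      apply Finset.sum_le_sum
      intro i _
      apply mul_le_mul_right
      exact ENNReal.rpow_le_rpow (le_iSup (fun h'' : {h'' : Fin d → ℝ // ‖h''‖ ≤ t} =>
        eLpNorm (finDiff k h''.1 (f i)) (ENNReal.ofReal q) volume) ⟨h', hh'⟩) hq0.le
    calc eLpNorm (finDiff k h' (fun x => ∑ i, a i * f i x)) (ENNReal.ofReal q) volume
        = (eLpNorm (finDiff k h' (fun x => ∑ i, a i * f i x)) (ENNReal.ofReal q) volume ^ q)
            ^ (1 / q) := by
          rw [one_div, ENNReal.rpow_rpow_inv hq0.ne']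
      _ ≤ C ^ (1 / q) := ENNReal.rpow_le_rpow hb (by positivity)
  calc modulus k (ENNReal.ofReal q) (fun x => ∑ i, a i * f i x) t ^ q
      ≤ (C ^ (1 / q)) ^ q := ENNReal.rpow_le_rpow hsup hq0.le
    _ = C := by rw [one_div, ENNReal.rpow_inv_rpow hq0.ne']
end
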